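/- arXiv:1109.5036 — 4 statements merged into one kernel-verified Lean document; each statement's English description precedes it below -/
import Mathlib

section
/- If every subgraph of a finite graph G has a vertex of degree at most k, then G has an orientation in which every vertex has in-degree at most k. -/
/-!
Induct on the number of vertices of a subgraph `H`: pick a vertex `v` of `H` of degree at most
`k`, orient `H - v` by induction and direct every remaining edge of `H` at `v` towards `v`.
The in-degrees in `H - v` are unchanged and `v` receives at most its degree `≤ k`.
-/

namespace SimpleGraph.Subgraph

variable {V : Type*} {G : SimpleGraph V}

def IsOrientation (H : G.Subgraph) (D : V → V → Prop) : Prop :=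
  (∀ u v, D u v → H.Adj u v) ∧ ∀ u v, H.Adj u v → (D u v ↔ ¬ D v u)

theorem isOrientation_bot_of_verts_eq_empty {H : G.Subgraph} (hH : H.verts = ∅) :
    H.IsOrientation fun _ _ => False := by
  refine ⟨fun _ _ => False.elim, fun u _ huv => ?_⟩
  simpa [hH] using H.edge_vert huv

theorem IsOrientation.not_adj_deleted {H : G.Subgraph} {v : V} {D : V → V → Prop}
    (hD : (H.deleteVerts {v}).IsOrientation D) {u w : V} (huw : D u w) : u ≠ v ∧ w ≠ v := by
  have := hD.1 u w huw
  rw [deleteVerts_adj] at this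
  exact ⟨this.2.1, this.2.2.2.1⟩

def extendToward (H : G.Subgraph) (D : V → V → Prop) (v : V) : V → V → Prop :=
  fun u w => D u w ∨ (H.Adj u w ∧ w = v)

theorem IsOrientation.extendToward {H : G.Subgraph} {v : V} {D : V → V → Prop}
    (hD : (H.deleteVerts {v}).IsOrientation D) : H.IsOrientation (H.extendToward D v) := by
  refine ⟨fun u w huw => huw.elim (fun h => deleteVerts_le.2 (hD.1 u w h)) And.left,
    fun u w huw => ?_⟩
  by_cases hw : w = v
  · exact iff_of_true (Or.inr ⟨huw, hw⟩) fun
      | .inl h => (hD.not_adj_deleted h).1 hw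
      | .inr ⟨_, hu⟩ => huw.ne (hu.trans hw.symm)
  by_cases hu : u = v
  · exact iff_of_false (fun
      | .inl h => (hD.not_adj_deleted h).1 hu
      | .inr ⟨_, hw'⟩ => hw hw') (not_not_intro (Or.inr ⟨huw.symm, hu⟩))
  have huw' : (H.deleteVerts {v}).Adj u w := by
    rw [deleteVerts_adj]
    exact ⟨H.edge_vert huw, hu, H.edge_vert huw.symm, hw, huw⟩
  simpa only [Subgraph.extendToward, hu, hw, and_false, or_false] using hD.2 u w huw'

theorem IsOrientation.setOf_extendToward_self {H : G.Subgraph} {v : V} {D : V → V → Prop}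
    (hD : (H.deleteVerts {v}).IsOrientation D) :
    {u | H.extendToward D v u v} ⊆ H.neighborSet v
  | _, .inl h => absurd rfl (hD.not_adj_deleted h).2
  | _, .inr ⟨huv, _⟩ => huv.symm

theorem setOf_extendToward_of_ne (H : G.Subgraph) (D : V → V → Prop) {v w : V} (hw : w ≠ v) :
    {u | H.extendToward D v u w} = {u | D u w} := by
  ext u
  simp [Subgraph.extendToward, hw]

theorem exists_isOrientation_ncard_le [Finite V] {k : ℕ}
    (h : ∀ H : G.Subgraph, H.verts.Nonempty → ∃ v ∈ H.verts, (H.neighborSet v).ncard ≤ k)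
    (H : G.Subgraph) : ∃ D, H.IsOrientation D ∧ ∀ v, {u | D u v}.ncard ≤ k := by
  induction hn : H.verts.ncard using Nat.strong_induction_on generalizing H with
  | _ n ih =>
    rcases H.verts.eq_empty_or_nonempty with hempty | hne
    · exact ⟨_, isOrientation_bot_of_verts_eq_empty hempty, by simp⟩
    obtain ⟨v, hv, hdeg⟩ := h H hne
    have hlt : (H.deleteVerts {v}).verts.ncard < n :=
      hn ▸ Set.ncard_sdiff_singleton_lt_of_mem hv (Set.toFinite _)
    obtain ⟨D, hD, hDk⟩ := ih _ hlt _ rfl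
    refine ⟨H.extendToward D v, hD.extendToward, fun w => ?_⟩
    rcases eq_or_ne w v with rfl | hw
    · exact (Set.ncard_le_ncard hD.setOf_extendToward_self (Set.toFinite _)).trans hdeg
    · exact H.setOf_extendToward_of_ne D hw ▸ hDk w

end SimpleGraph.Subgraph

/-- If every (nonempty) subgraph of a finite graph `G` has a vertex of degree at
most `k`, then `G` has an orientation `D` in which every vertex has in-degree at
most `k`. -/
theorem stmt1 {V : Type*} [Fintype V] (G : SimpleGraph V) (k : ℕ)
    (h : ∀ H : G.Subgraph, H.verts.Nonempty → ∃ v ∈ H.verts, (H.neighborSet v).ncard ≤ k) :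
    ∃ D : V → V → Prop,
      (∀ u v, D u v → G.Adj u v) ∧
      (∀ u v, G.Adj u v → (D u v ↔ ¬ D v u)) ∧
      (∀ v, {u | D u v}.ncard ≤ k) := by
  obtain ⟨D, ⟨hadj, hasymm⟩, hk⟩ := SimpleGraph.Subgraph.exists_isOrientation_ncard_le h ⊤
  exact ⟨D, hadj, hasymm, hk⟩
end

section
/- If G is a d-degenerate finite graph on n vertices, then for every integer t ≥ 1, the number of complete subgraphs of G on t vertices is at most C(d, t−1)·n. -/
/-!
Peel off a vertex `v` of degree at most `d` in the current vertex set `s`. A `t`-clique inside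
`s` either avoids `v`, and then lies in `s.erase v`, or contains `v`, and then is determined by
its other `t - 1` vertices, a subset of the at most `d` neighbours of `v` in `s`. Induction on
`s` gives at most `C(d, t - 1) * #s` cliques.
-/

open Finset

namespace SimpleGraph

variable {V : Type*}

def IsDegenerate (G : SimpleGraph V) (d : ℕ) : Prop :=
  ∀ H : G.Subgraph, H.verts.Nonempty → ∃ v ∈ H.verts, (H.neighborSet v).ncard ≤ d

variable {G : SimpleGraph V} [DecidableRel G.Adj]

lemma IsDegenerate.exists_card_filter_adj_le {d : ℕ} (hG : G.IsDegenerate d) {s : Finset V}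
    (hs : s.Nonempty) : ∃ v ∈ s, #{w ∈ s | G.Adj v w} ≤ d := by
  obtain ⟨v, hv, hdeg⟩ := hG ((⊤ : G.Subgraph).induce s) (by simpa using hs)
  have hv : v ∈ s := hv
  have hnbr : ((⊤ : G.Subgraph).induce s).neighborSet v = ↑{w ∈ s | G.Adj v w} := by
    ext w
    simp [hv]
  rw [hnbr, Set.ncard_coe_finset] at hdeg
  exact ⟨v, hv, hdeg⟩

variable [Fintype V] [DecidableEq V]

lemma card_cliques_subset_containing_le_choose (t : ℕ) (s : Finset V) (v : V) :
    #{c ∈ G.cliqueFinset t | c ⊆ s ∧ v ∈ c} ≤ (#{w ∈ s | G.Adj v w}).choose (t - 1) := by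
  rw [← card_powersetCard]
  refine card_le_card_of_injOn (·.erase v) (fun c hc ↦ ?_) (fun c₁ hc₁ c₂ hc₂ he ↦ ?_)
  · simp only [coe_filter, mem_cliqueFinset_iff, Set.mem_ofPred_eq] at hc
    obtain ⟨hclique, hcs, hvc⟩ := hc
    refine mem_powersetCard.2 ⟨fun w hw ↦ ?_, (hclique.erase_of_mem hvc).card_eq⟩
    obtain ⟨hwv, hwc⟩ := mem_erase.1 hw
    exact mem_filter.2 ⟨hcs hwc, hclique.isClique hvc hwc (Ne.symm hwv)⟩
  · simp only [coe_filter, Set.mem_ofPred_eq] at hc₁ hc₂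
    rw [← insert_erase hc₁.2.2, ← insert_erase hc₂.2.2]
    exact congrArg (insert v) he

lemma IsDegenerate.card_cliques_subset_le {d t : ℕ} (hG : G.IsDegenerate d) (ht : 1 ≤ t)
    (s : Finset V) : #{c ∈ G.cliqueFinset t | c ⊆ s} ≤ d.choose (t - 1) * #s := by
  induction s using Finset.strongInduction with
  | H s ih =>
  obtain rfl | hs := s.eq_empty_or_nonempty
  · simp only [subset_empty, card_empty, mul_zero, Nat.le_zero, card_eq_zero,
      filter_eq_empty_iff, mem_cliqueFinset_iff]
    rintro c hc rfl
    have := hc.card_eq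
    simp only [card_empty] at this
    omega
  obtain ⟨v, hv, hdeg⟩ := hG.exists_card_filter_adj_le hs
  have hsplit : #{c ∈ G.cliqueFinset t | c ⊆ s} =
      #{c ∈ G.cliqueFinset t | c ⊆ s ∧ v ∈ c} + #{c ∈ G.cliqueFinset t | c ⊆ s.erase v} := by
    rw [← card_filter_add_card_filter_not (p := (v ∈ ·)), filter_filter, filter_filter]
    simp only [subset_erase]
  have hthrough : #{c ∈ G.cliqueFinset t | c ⊆ s ∧ v ∈ c} ≤ d.choose (t - 1) :=
    (card_cliques_subset_containing_le_choose t s v).trans (Nat.choose_le_choose _ hdeg)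
  have hrest := ih _ (erase_ssubset hv)
  rw [card_erase_of_mem hv, Nat.mul_sub_one] at hrest
  have hpos : d.choose (t - 1) ≤ d.choose (t - 1) * #s := Nat.le_mul_of_pos_right _ hs.card_pos
  omega

end SimpleGraph

open SimpleGraph in
/-- A `d`-degenerate finite graph on `n` vertices has at most `C(d, t-1) * n`
complete subgraphs on `t` vertices (for `t ≥ 1`). -/
theorem stmt3 {V : Type*} [Fintype V] [DecidableEq V] (G : SimpleGraph V) [DecidableRel G.Adj]
    (d t : ℕ) (ht : 1 ≤ t)
    (h : ∀ H : G.Subgraph, H.verts.Nonempty → ∃ v ∈ H.verts, (H.neighborSet v).ncard ≤ d) :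
    (G.cliqueFinset t).card ≤ d.choose (t - 1) * Fintype.card V := by
  have hG : G.IsDegenerate d := h
  simpa using hG.card_cliques_subset_le ht univ
end

section
/- The tree-depth of a path on n vertices is at least ⌈log₂(n+1)⌉; more precisely, the closure of any rooted forest of depth d has no path on 2^d vertices as a subgraph. -/
/-!
Fix a path in the closure of a rooted forest whose vertices have depths in `[ℓ, ℓ + k)`.
Adjacent vertices of the closure are comparable, so all vertices of the path share their
ancestor at any depth that none of them goes above. Applied to the minimal depth `m`, this
shows the vertex of depth `m` is unique: every vertex of depth `m` is its own ancestor at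
depth `m`. Deleting it leaves two paths with depths in `[m + 1, ℓ + k)`, so by induction the
path has at most `2 (2 ^ (k - 1) - 1) + 1 = 2 ^ k - 1` vertices.
-/

/-- A rooted forest on `V` given by a parent function `p` together with a depth
function `dep`: roots (fixed points of `p`) have depth 1, and every non-root has
depth one more than its parent. -/
def ParentDepth {V : Type*} (p : V → V) (dep : V → ℕ) : Prop :=
  ∀ v, (p v = v → dep v = 1) ∧ (p v ≠ v → dep v = dep (p v) + 1)

/-- The closure of a rooted forest: two distinct vertices are adjacent iff one is
a proper ancestor of the other (joined by a directed path). -/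
def forestClosure {V : Type*} (p : V → V) : SimpleGraph V :=
  SimpleGraph.fromRel (fun u v => ∃ k, 0 < k ∧ p^[k] u = v)

/-- `G` has tree-depth at most `s`: `G` is a subgraph of the closure of a rooted
forest of depth at most `s`. -/
def TreeDepthLE {V : Type*} (G : SimpleGraph V) (s : ℕ) : Prop :=
  ∃ (p : V → V) (dep : V → ℕ), ParentDepth p dep ∧ (∀ v, dep v ≤ s) ∧ G ≤ forestClosure p

/-- `A` is contained in `B` as a subgraph. -/
def Contains {α β : Type*} (A : SimpleGraph α) (B : SimpleGraph β) : Prop :=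
  ∃ f : α → β, Function.Injective f ∧ ∀ a b, A.Adj a b → B.Adj (f a) (f b)

open Set

variable {V : Type*} {p : V → V} {dep : V → ℕ}

/-- The ancestor of `v` at depth `ℓ` (meaningful for `1 ≤ ℓ ≤ dep v`). -/
def ancestorAt (p : V → V) (dep : V → ℕ) (ℓ : ℕ) (v : V) : V :=
  p^[dep v - ℓ] v

@[simp]
lemma ancestorAt_self (v : V) : ancestorAt p dep (dep v) v = v := by
  simp [ancestorAt]

/-- `f` traces a path of `G` through the vertices `f a, …, f (b - 1)`. -/
def IsPathSegment (G : SimpleGraph V) (f : ℕ → V) (a b : ℕ) : Prop :=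
  InjOn f (Ico a b) ∧ ∀ i, a ≤ i → i + 1 < b → G.Adj (f i) (f (i + 1))

lemma IsPathSegment.mono {G : SimpleGraph V} {f : ℕ → V} {a b a' b' : ℕ}
    (hf : IsPathSegment G f a b) (ha : a ≤ a') (hb : b' ≤ b) : IsPathSegment G f a' b' :=
  ⟨hf.1.mono (Ico_subset_Ico ha hb), fun i hi hib => hf.2 i (ha.trans hi) (by omega)⟩

lemma exists_isPathSegment_of_contains {G : SimpleGraph V} {n : ℕ} (hn : 0 < n)
    (hc : Contains (SimpleGraph.pathGraph n) G) : ∃ f : ℕ → V, IsPathSegment G f 0 n := by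
  obtain ⟨g, hinj, hadj⟩ := hc
  let f : ℕ → V := fun i => if hi : i < n then g ⟨i, hi⟩ else g ⟨0, hn⟩
  have hf : ∀ i (hi : i < n), f i = g ⟨i, hi⟩ := fun i hi => dif_pos hi
  refine ⟨f, fun i hi j hj hij => ?_, fun i _ hi => ?_⟩
  · rw [hf i hi.2, hf j hj.2] at hij
    exact Fin.mk.inj_iff.mp (hinj hij)
  · rw [hf i (by omega), hf (i + 1) hi]
    exact hadj _ _ (SimpleGraph.pathGraph_adj.mpr (Or.inl rfl))

namespace ParentDepth

variable (h : ParentDepth p dep)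
include h

lemma one_le (v : V) : 1 ≤ dep v := by
  by_cases hv : p v = v
  · exact ((h v).1 hv).ge
  · rw [(h v).2 hv]
    exact Nat.le_add_left 1 _

lemma apply_eq_self_of_dep_eq_one {v : V} (hv : dep v = 1) : p v = v := by
  by_contra hne
  have := (h v).2 hne
  have := h.one_le (p v)
  omega

lemma dep_iterate (j : ℕ) (v : V) : dep (p^[j] v) = max (dep v - j) 1 := by
  induction j generalizing v with
  | zero => simp [h.one_le v]
  | succ j ih =>
    rw [Function.iterate_succ_apply, ih]
    by_cases hv : p v = v
    · have := (h v).1 hv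
      rw [hv]
      omega
    · have := (h v).2 hv
      omega

lemma iterate_eq_iterate {v : V} {i j : ℕ} (hi : dep v - 1 ≤ i) (hj : dep v - 1 ≤ j) :
    p^[i] v = p^[j] v := by
  have hroot : p (p^[dep v - 1] v) = p^[dep v - 1] v :=
    h.apply_eq_self_of_dep_eq_one (by rw [h.dep_iterate]; omega)
  have key : ∀ m, dep v - 1 ≤ m → p^[m] v = p^[dep v - 1] v := fun m hm => by
    rw [← Nat.sub_add_cancel hm, Function.iterate_add_apply, Function.iterate_fixed hroot]
  rw [key i hi, key j hj]

lemma ancestorAt_iterate {ℓ k : ℕ} {v : V} (hℓ : ℓ ≤ dep (p^[k] v)) :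
    ancestorAt p dep ℓ (p^[k] v) = ancestorAt p dep ℓ v := by
  rw [h.dep_iterate] at hℓ
  rw [ancestorAt, ancestorAt, ← Function.iterate_add_apply, h.dep_iterate]
  by_cases hk : k < dep v
  · congr 1
    omega
  · exact h.iterate_eq_iterate (by omega) (by omega)

lemma ancestorAt_eq_of_adj {ℓ : ℕ} {u v : V} (huv : (forestClosure p).Adj u v)
    (hu : ℓ ≤ dep u) (hv : ℓ ≤ dep v) :
    ancestorAt p dep ℓ u = ancestorAt p dep ℓ v := by
  rw [forestClosure, SimpleGraph.fromRel_adj] at huv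
  obtain ⟨-, ⟨k, -, rfl⟩ | ⟨k, -, rfl⟩⟩ := huv
  · exact (h.ancestorAt_iterate hv).symm
  · exact h.ancestorAt_iterate hu

lemma ancestorAt_eq_of_isPathSegment {f : ℕ → V} {a b ℓ : ℕ}
    (hf : IsPathSegment (forestClosure p) f a b) (hdep : ∀ i ∈ Ico a b, ℓ ≤ dep (f i))
    {i j : ℕ} (hi : i ∈ Ico a b) (hj : j ∈ Ico a b) :
    ancestorAt p dep ℓ (f i) = ancestorAt p dep ℓ (f j) := by
  suffices ∀ i ∈ Ico a b, ancestorAt p dep ℓ (f i) = ancestorAt p dep ℓ (f a) by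
    rw [this i hi, this j hj]
  rintro i ⟨hai, hib⟩
  induction i, hai using Nat.le_induction with
  | base => rfl
  | succ i hai ih =>
    rw [← ih (by omega)]
    exact (h.ancestorAt_eq_of_adj (hf.2 i hai hib) (hdep i ⟨hai, by omega⟩)
      (hdep _ ⟨by omega, hib⟩)).symm

lemma dep_lt_of_isPathSegment_of_dep_le {f : ℕ → V} {a b t : ℕ}
    (hf : IsPathSegment (forestClosure p) f a b) (ht : t ∈ Ico a b)
    (hmin : ∀ i ∈ Ico a b, dep (f t) ≤ dep (f i)) {i : ℕ} (hi : i ∈ Ico a b)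
    (hit : i ≠ t) :
    dep (f t) < dep (f i) := by
  refine (hmin i hi).lt_of_ne fun heq => hit (hf.1 hi ht ?_)
  have := h.ancestorAt_eq_of_isPathSegment hf hmin hi ht
  rwa [ancestorAt_self (f t), heq, ancestorAt_self] at this

lemma lt_add_two_pow_of_isPathSegment {f : ℕ → V} {a b ℓ k : ℕ}
    (hf : IsPathSegment (forestClosure p) f a b)
    (hdep : ∀ i ∈ Ico a b, ℓ ≤ dep (f i) ∧ dep (f i) < ℓ + k) : b < a + 2 ^ k := by
  induction k generalizing a b ℓ with
  | zero =>
    by_contra! hab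
    rw [pow_zero] at hab
    have := hdep a ⟨le_rfl, by omega⟩
    omega
  | succ k ih =>
    rcases le_or_gt b a with hba | hab
    · have := Nat.one_le_two_pow (n := k + 1)
      omega
    obtain ⟨t, ht, hmin⟩ :=
      (Finset.Ico a b).exists_min_image (dep ∘ f) (Finset.nonempty_Ico.mpr hab)
    rw [Finset.mem_Ico] at ht
    replace hmin : ∀ i ∈ Ico a b, dep (f t) ≤ dep (f i) := fun i hi =>
      hmin i (Finset.mem_Ico.mpr hi)
    have hrest : ∀ i ∈ Ico a b, i ≠ t →
        dep (f t) + 1 ≤ dep (f i) ∧ dep (f i) < dep (f t) + 1 + k := fun i hi hit => by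
        have := h.dep_lt_of_isPathSegment_of_dep_le hf ht hmin hi hit
        have := hdep i hi
        have := hdep t ht
        omega
    have hleft : t < a + 2 ^ k :=
      ih (hf.mono le_rfl ht.2.le) fun i ⟨hai, hit⟩ => hrest i ⟨hai, by omega⟩ (by omega)
    have hright : b < t + 1 + 2 ^ k :=
      ih (hf.mono (by omega) le_rfl) fun i ⟨hti, hib⟩ => hrest i ⟨by omega, hib⟩ (by omega)
    rw [pow_succ]
    omega

lemma lt_two_pow_of_contains_pathGraph {d n : ℕ} (hd : ∀ v, dep v ≤ d)
    (hc : Contains (SimpleGraph.pathGraph n) (forestClosure p)) : n < 2 ^ d := by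
  rcases n.eq_zero_or_pos with rfl | hn
  · exact Nat.two_pow_pos d
  obtain ⟨f, hf⟩ := exists_isPathSegment_of_contains hn hc
  have := h.lt_add_two_pow_of_isPathSegment (ℓ := 1) (k := d) hf fun i _ =>
    ⟨h.one_le _, Nat.lt_one_add_iff.mpr (hd (f i))⟩
  omega

end ParentDepth

/-- The closure of any rooted forest of depth `d` has no path on `2^d` vertices
as a subgraph; hence the tree-depth of a path on `n` vertices is at least
`⌈log₂ (n+1)⌉`. -/
theorem stmt7 (d : ℕ) :
    (∀ (V : Type) (p : V → V) (dep : V → ℕ), ParentDepth p dep → (∀ v, dep v ≤ d) →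
      ¬ Contains (SimpleGraph.pathGraph (2 ^ d)) (forestClosure p)) ∧
    (∀ n : ℕ, TreeDepthLE (SimpleGraph.pathGraph n) d → Nat.clog 2 (n + 1) ≤ d) := by
  constructor
  · intro V p dep h hd hc
    exact (h.lt_two_pow_of_contains_pathGraph hd hc).false
  · rintro n ⟨p, dep, h, hd, hle⟩
    rw [Nat.clog_le_iff_le_pow one_lt_two]
    exact h.lt_two_pow_of_contains_pathGraph hd
      ⟨id, Function.injective_id, fun _ _ hab => hle hab⟩
end

section
/- Let r ≥ 1 and let G be any finite graph. Testing whether G contains a complete subgraph on m vertices is equivalent to testing whether the r-subdivision of G contains a subgraph isomorphic to the r-subdivision of K_m: G contains K_m as a subgraph if and only if the r-subdivision of G contains the r-subdivision of K_m as a subgraph. -/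
/-- The `r`-subdivision of `G`: every edge `{a, b}` (with `a < b`) is replaced by
a path through `r` new internal vertices `(a, b, 0), …, (a, b, r-1)`. -/
def subdiv {V : Type*} [LinearOrder V] (r : ℕ) (G : SimpleGraph V) :
    SimpleGraph (V ⊕ (V × V × Fin r)) :=
  SimpleGraph.fromRel (fun x y =>
    match x, y with
    | Sum.inl u, Sum.inr (a, b, i) =>
        G.Adj a b ∧ a < b ∧ ((u = a ∧ (i : ℕ) = 0) ∨ (u = b ∧ (i : ℕ) = r - 1))
    | Sum.inr (a, b, i), Sum.inr (a', b', j) =>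
        a = a' ∧ b = b' ∧ G.Adj a b ∧ a < b ∧ (j : ℕ) = (i : ℕ) + 1
    | _, _ => False)

/-
Forward direction: an injective homomorphism `f : H → G` induces one between the subdivisions,
sending the `i`-th internal vertex of the edge `{a, b}` to the `i`-th internal vertex of
`{f a, f b}`, counted from the other end when `f` reverses the order of `a` and `b`.

Backward direction: the internal vertices of `subdiv r G` have degree two, so a nonbacktracking
walk that leaves a branch vertex runs through a whole subdivided edge and reaches an adjacent
branch vertex after exactly `r + 1` steps. For `m ≥ 4` the branch vertices of the subdivided
`K_m` have degree at least three, hence are sent to branch vertices, and the images of the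
subdivided edges give the edges of a `K_m` in `G`. For `m = 3` the subdivided triangle is a cycle
of length `3 (r + 1)`; its image passes through a branch vertex, and going around the cycle from
there visits three pairwise adjacent branch vertices. The cases `m ≤ 2` are immediate.
-/

open Sum SimpleGraph

theorem contains_iff_isContained {α β : Type*} {A : SimpleGraph α} {B : SimpleGraph β} :
    Contains A B ↔ A ⊑ B :=
  ⟨fun ⟨f, hf, hadj⟩ => ⟨⟨⟨f, hadj _ _⟩, hf⟩⟩,
    fun ⟨f⟩ => ⟨f, f.injective, fun _ _ => f.toHom.map_adj⟩⟩

section NonbacktrackingWalk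

variable {α β : Type*} {G : SimpleGraph α} {w : ℕ → α} {n : ℕ}

structure IsNonbacktrackingWalk (G : SimpleGraph α) (w : ℕ → α) (n : ℕ) : Prop where
  adj : ∀ j < n, G.Adj (w j) (w (j + 1))
  ne : ∀ j, j + 2 ≤ n → w (j + 2) ≠ w j

namespace IsNonbacktrackingWalk

theorem mono (hw : IsNonbacktrackingWalk G w n) {m : ℕ} (hm : m ≤ n) :
    IsNonbacktrackingWalk G w m :=
  ⟨fun j _ => hw.adj j (by omega), fun j _ => hw.ne j (by omega)⟩

theorem shift (hw : IsNonbacktrackingWalk G w n) {t m : ℕ} (h : t + m ≤ n) :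
    IsNonbacktrackingWalk G (fun j => w (t + j)) m :=
  ⟨fun j _ => hw.adj (t + j) (by omega), fun j _ => hw.ne (t + j) (by omega)⟩

theorem reverse (hw : IsNonbacktrackingWalk G w n) :
    IsNonbacktrackingWalk G (fun j => w (n - j)) n := by
  refine ⟨fun j hj => ?_, fun j hj => ?_⟩
  · have := hw.adj (n - (j + 1)) (by omega)
    rwa [show n - (j + 1) + 1 = n - j by omega, adj_comm] at this
  · have := hw.ne (n - (j + 2)) (by omega)
    rwa [show n - (j + 2) + 2 = n - j by omega, ne_comm] at this

theorem map {H : SimpleGraph β} (hw : IsNonbacktrackingWalk G w n) (f : Copy G H) :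
    IsNonbacktrackingWalk H (f ∘ w) n :=
  ⟨fun j hj => f.toHom.map_adj (hw.adj j hj), fun j hj => f.injective.ne (hw.ne j hj)⟩

/-- A nonbacktracking walk that enters a chain `P` of vertices of degree at most two has to
follow it. -/
theorem eq_of_forall_adj (hw : IsNonbacktrackingWalk G w n) {P : ℕ → α}
    (hP : ∀ j, 1 ≤ j → j < n → ∀ z, G.Adj (P j) z → z = P (j - 1) ∨ z = P (j + 1))
    (h₀ : w 0 = P 0) (h₁ : w 1 = P 1) : ∀ j ≤ n, w j = P j := by
  have follow : ∀ j, j + 1 ≤ n → w j = P j ∧ w (j + 1) = P (j + 1) := by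
    intro j
    induction j with
    | zero => exact fun _ => ⟨h₀, h₁⟩
    | succ j ih =>
      intro hj
      obtain ⟨hj₀, hj₁⟩ := ih (by omega)
      refine ⟨hj₁, ?_⟩
      have hadj := hw.adj (j + 1) (by omega)
      rw [hj₁] at hadj
      refine (hP (j + 1) (by omega) (by omega) _ hadj).resolve_left fun h => ?_
      exact hw.ne j (by omega) (h.trans hj₀.symm)
  intro j hj
  rcases Nat.eq_zero_or_pos j with rfl | hj₀
  · exact h₀
  · simpa [Nat.sub_add_cancel hj₀] using (follow (j - 1) (by omega)).2

end IsNonbacktrackingWalk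

end NonbacktrackingWalk

section EdgePath

variable {V : Type*} {r : ℕ}

/-- The `j`-th vertex of the subdivided edge `{x, y}`, walking from `x` (`j = 0`) to `y`
(`j = r + 1`); every index beyond `r + 1` also gives `y`. -/
def edgePath (r : ℕ) (x y : V) (j : ℕ) : V ⊕ (V × V × Fin r) :=
  if h₀ : j = 0 then inl x else if h : j ≤ r then inr (x, y, ⟨j - 1, by omega⟩) else inl y

@[simp] theorem edgePath_zero (x y : V) : edgePath r x y 0 = inl x := rfl

theorem edgePath_of_lt {x y : V} {j : ℕ} (h : r < j) : edgePath r x y j = inl y := by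
  simp [edgePath, show j ≠ 0 by omega, show ¬ j ≤ r by omega]

theorem edgePath_of_pos {x y : V} {j : ℕ} (h₁ : 1 ≤ j) (h₂ : j ≤ r) :
    edgePath r x y j = inr (x, y, ⟨j - 1, by omega⟩) := by
  simp [edgePath, show j ≠ 0 by omega, h₂]

theorem edgePath_succ {x y : V} {k : ℕ} (h : k < r) :
    edgePath r x y (k + 1) = inr (x, y, ⟨k, h⟩) :=
  edgePath_of_pos (by omega) h

theorem edgePath_add_two_ne {x y : V} (hxy : x ≠ y) {j : ℕ} (hj : j + 2 ≤ r + 1) :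
    edgePath r x y (j + 2) ≠ edgePath r x y j := by
  unfold edgePath
  split_ifs <;> grind

end EdgePath

section Subdivision

variable {V : Type*} [LinearOrder V] {G : SimpleGraph V} {r : ℕ}

theorem subdiv_not_adj_inl_inl {u v : V} : ¬ (subdiv r G).Adj (inl u) (inl v) := by
  simp [subdiv]

theorem subdiv_adj_inl_inr {u x y : V} {i : Fin r} :
    (subdiv r G).Adj (inl u) (inr (x, y, i)) ↔
      G.Adj x y ∧ x < y ∧ ((u = x ∧ (i : ℕ) = 0) ∨ (u = y ∧ (i : ℕ) = r - 1)) := by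
  simp [subdiv]

theorem subdiv_adj_inr_inr {x y x' y' : V} {i j : Fin r} :
    (subdiv r G).Adj (inr (x, y, i)) (inr (x', y', j)) ↔
      x = x' ∧ y = y' ∧ G.Adj x y ∧ x < y ∧ ((j : ℕ) = i + 1 ∨ (i : ℕ) = j + 1) := by
  simp only [subdiv, fromRel_adj, ne_eq, inr.injEq, Prod.mk.injEq, Fin.ext_iff]
  constructor
  · rintro ⟨-, ⟨rfl, rfl, hxy, hlt, h⟩ | ⟨rfl, rfl, hxy, hlt, h⟩⟩ <;> simp_all
  · rintro ⟨rfl, rfl, hxy, hlt, h⟩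
    refine ⟨by omega, ?_⟩
    rcases h with h | h <;> simp_all

theorem subdiv_bot : subdiv r (⊥ : SimpleGraph V) = ⊥ := by
  ext (u | ⟨x, y, i⟩) (v | ⟨x', y', j⟩) <;> simp [subdiv]

theorem subdiv_exists_adj_inl_inr (hr : 1 ≤ r) {a b : V} (h : G.Adj a b) :
    ∃ i, (subdiv r G).Adj (inl a) (inr (min a b, max a b, i)) := by
  rcases lt_or_gt_of_ne h.ne with hlt | hlt
  · exact ⟨⟨0, hr⟩, by simp [subdiv_adj_inl_inr, hlt.le, h, hlt]⟩
  · exact ⟨⟨r - 1, by omega⟩, by simp [subdiv_adj_inl_inr, hlt.le, h.symm, hlt]⟩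

theorem subdiv_ne_bot (hr : 1 ≤ r) (hG : G ≠ ⊥) : subdiv r G ≠ ⊥ := by
  obtain ⟨a, b, hab⟩ := ne_bot_iff_exists_adj.1 hG
  obtain ⟨i, hi⟩ := subdiv_exists_adj_inl_inr hr hab
  exact ne_bot_iff_exists_adj.2 ⟨_, _, hi⟩

theorem subdiv_adj_edgePath {x y : V} {j : ℕ} (h₁ : 1 ≤ j) (h₂ : j ≤ r) {z}
    (h : (subdiv r G).Adj (edgePath r x y j) z) :
    z = edgePath r x y (j - 1) ∨ z = edgePath r x y (j + 1) := by
  obtain ⟨k, rfl⟩ : ∃ k, j = k + 1 := ⟨j - 1, by omega⟩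
  rw [edgePath_succ (by omega)] at h
  rcases z with u | ⟨x', y', i⟩
  · obtain ⟨-, -, ⟨rfl, hk⟩ | ⟨rfl, hk⟩⟩ := subdiv_adj_inl_inr.1 h.symm <;> simp only at hk
    · left; simp [hk]
    · right; rw [edgePath_of_lt (by omega)]
  · obtain ⟨rfl, rfl, -, -, hk | hk⟩ := subdiv_adj_inr_inr.1 h <;> simp only at hk
    · right; rw [edgePath_succ (by omega)]; simp [Fin.ext_iff, hk]
    · left; simp only [Nat.add_sub_cancel, hk, edgePath_succ i.isLt]

theorem subdiv_adj_edgePath_succ {x y : V} (hxy : G.Adj x y) (hlt : x < y) (hr : 1 ≤ r)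
    {j : ℕ} (hj : j ≤ r) : (subdiv r G).Adj (edgePath r x y j) (edgePath r x y (j + 1)) := by
  rcases Nat.eq_zero_or_pos j with rfl | hj₀
  · rw [zero_add, edgePath_succ hr, edgePath_zero, subdiv_adj_inl_inr]
    simp [hxy, hlt]
  rcases Nat.lt_or_ge j r with hjr | hjr
  · obtain ⟨k, rfl⟩ : ∃ k, j = k + 1 := ⟨j - 1, by omega⟩
    rw [edgePath_succ (by omega), edgePath_succ hjr, subdiv_adj_inr_inr]
    simp [hxy, hlt]
  · rw [edgePath_of_pos hj₀ hj, edgePath_of_lt (by omega)]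
    refine (subdiv_adj_inl_inr.2 ?_).symm
    simp only [hxy, hlt, true_and]
    omega

theorem subdiv_eq_inl_of_adj_of_adj_of_adj {z w₁ w₂ w₃ : V ⊕ (V × V × Fin r)}
    (h₁ : (subdiv r G).Adj z w₁) (h₂ : (subdiv r G).Adj z w₂) (h₃ : (subdiv r G).Adj z w₃)
    (h₁₂ : w₁ ≠ w₂) (h₁₃ : w₁ ≠ w₃) (h₂₃ : w₂ ≠ w₃) : ∃ v, z = inl v := by
  rcases z with v | ⟨x, y, k⟩
  · exact ⟨v, rfl⟩
  have hk := k.isLt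
  rw [← edgePath_succ hk] at h₁ h₂ h₃
  rcases subdiv_adj_edgePath (by omega) (by omega) h₁ with rfl | rfl <;>
    rcases subdiv_adj_edgePath (by omega) (by omega) h₂ with rfl | rfl <;>
    rcases subdiv_adj_edgePath (by omega) (by omega) h₃ with rfl | rfl <;>
    simp at h₁₂ h₁₃ h₂₃

theorem isNonbacktrackingWalk_edgePath {x y : V} (hxy : G.Adj x y) (hlt : x < y) (hr : 1 ≤ r) :
    IsNonbacktrackingWalk (subdiv r G) (edgePath r x y) (r + 1) :=
  ⟨fun _ hj => subdiv_adj_edgePath_succ hxy hlt hr (by omega),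
    fun _ hj => edgePath_add_two_ne hlt.ne hj⟩

namespace IsNonbacktrackingWalk

variable {w : ℕ → V ⊕ (V × V × Fin r)} {n : ℕ}

theorem eq_edgePath_add (hw : IsNonbacktrackingWalk (subdiv r G) w n) {x y : V} {i : ℕ}
    (hn : i + n ≤ r + 1) (h₀ : w 0 = edgePath r x y i) (h₁ : w 1 = edgePath r x y (i + 1)) :
    ∀ j ≤ n, w j = edgePath r x y (i + j) := by
  refine hw.eq_of_forall_adj (P := fun j => edgePath r x y (i + j)) (fun j _ _ z hz => ?_) h₀ h₁
  rw [show i + (j - 1) = i + j - 1 by omega, ← add_assoc]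
  exact subdiv_adj_edgePath (by omega) (by omega) hz

theorem eq_edgePath_sub (hw : IsNonbacktrackingWalk (subdiv r G) w n) {x y : V} {i : ℕ}
    (hi : i ≤ r + 1) (hn : n ≤ i) (h₀ : w 0 = edgePath r x y i)
    (h₁ : w 1 = edgePath r x y (i - 1)) : ∀ j ≤ n, w j = edgePath r x y (i - j) := by
  refine hw.eq_of_forall_adj (P := fun j => edgePath r x y (i - j)) (fun j _ _ z hz => ?_) h₀ h₁
  rw [show i - (j - 1) = i - j + 1 by omega, show i - (j + 1) = i - j - 1 by omega]
  exact (subdiv_adj_edgePath (by omega) (by omega) hz).symm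

theorem exists_inl_adj (hw : IsNonbacktrackingWalk (subdiv r G) w (r + 1)) {u : V}
    (h₀ : w 0 = inl u) : ∃ u', w (r + 1) = inl u' ∧ G.Adj u u' := by
  have h := hw.adj 0 (by omega)
  rw [h₀] at h
  obtain ⟨x, y, k, hw₁⟩ : ∃ x y k, w 1 = inr (x, y, k) := by
    rcases hw₁ : w 1 with v | ⟨x, y, k⟩
    · exact absurd (hw₁ ▸ h) subdiv_not_adj_inl_inl
    · exact ⟨x, y, k, rfl⟩
  have hr : 1 ≤ r := k.pos
  rw [hw₁, subdiv_adj_inl_inr] at h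
  obtain ⟨hxy, -, ⟨rfl, hk⟩ | ⟨rfl, hk⟩⟩ := h
  · refine ⟨y, ?_, hxy⟩
    have := hw.eq_edgePath_add (i := 0) (x := u) (y := y) (by omega) h₀
      (by rw [hw₁, edgePath_succ (by omega)]; simp [Fin.ext_iff, hk]) (r + 1) le_rfl
    rwa [edgePath_of_lt (by omega)] at this
  · refine ⟨x, ?_, hxy.symm⟩
    have := hw.eq_edgePath_sub (i := r + 1) (x := x) (y := u) le_rfl le_rfl
      (by rw [h₀, edgePath_of_lt (by omega)])
      (by rw [hw₁, Nat.add_sub_cancel, edgePath_of_pos hr le_rfl]; simp [Fin.ext_iff, hk])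
      (r + 1) le_rfl
    rwa [Nat.sub_self, edgePath_zero] at this

theorem exists_inl (hw : IsNonbacktrackingWalk (subdiv r G) w r) :
    ∃ t ≤ r, ∃ u, w t = inl u := by
  rcases hw₀ : w 0 with u | ⟨x, y, k⟩
  · exact ⟨0, by omega, u, hw₀⟩
  have hk := k.isLt
  rw [← edgePath_succ hk] at hw₀
  have h := hw.adj 0 (by omega)
  rw [hw₀] at h
  rcases subdiv_adj_edgePath (by omega) (by omega) h with hw₁ | hw₁
  · refine ⟨k + 1, by omega, x, ?_⟩
    have := (hw.mono (m := k + 1) (by omega)).eq_edgePath_sub (by omega) le_rfl hw₀ hw₁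
      (k + 1) le_rfl
    rwa [Nat.sub_self, edgePath_zero] at this
  · refine ⟨r - k, by omega, y, ?_⟩
    have := (hw.mono (m := r - k) (by omega)).eq_edgePath_add (by omega) hw₀ hw₁ (r - k) le_rfl
    rwa [edgePath_of_lt (by omega)] at this

end IsNonbacktrackingWalk

end Subdivision

section Functoriality

variable {V W : Type*} [LinearOrder V] [LinearOrder W] {G : SimpleGraph V} {H : SimpleGraph W}
  {r : ℕ}

def subdivMap (r : ℕ) (f : W → V) : W ⊕ (W × W × Fin r) → V ⊕ (V × V × Fin r) :=
  Sum.map f fun (a, b, i) =>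
    if (a < b ↔ f a < f b) then (f a, f b, i) else (f b, f a, i.rev)

theorem subdivMap_injective {f : W → V} (hf : Function.Injective f) :
    Function.Injective (subdivMap r f) := by
  have swap : ∀ a b, (b < a ↔ f b < f a) ↔ (a < b ↔ f a < f b) := by
    intro a b
    rcases eq_or_ne a b with rfl | hab
    · simp
    · rw [← not_le, ← not_le (b := f b), hab.le_iff_lt, (hf.ne hab).le_iff_lt, not_iff_not]
  refine hf.sumMap fun ⟨a, b, i⟩ ⟨a', b', i'⟩ h => ?_
  dsimp only at h
  split_ifs at h with h₁ h₂ h₂ <;> simp only [Prod.mk.injEq, hf.eq_iff, Fin.rev_inj] at h <;>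
    obtain ⟨rfl, rfl, rfl⟩ := h
  · rfl
  · exact absurd ((swap _ _).1 h₁) h₂
  · exact absurd ((swap _ _).2 h₂) h₁
  · rfl

theorem subdivMap_inr_of_lt {f : W → V} (hf : Function.Injective f) {a b : W} (hab : a < b)
    (i : Fin r) :
    f a < f b ∧ subdivMap r f (inr (a, b, i)) = inr (f a, f b, i) ∨
      f b < f a ∧ subdivMap r f (inr (a, b, i)) = inr (f b, f a, i.rev) := by
  by_cases h : f a < f b
  · exact .inl ⟨h, by simp [subdivMap, hab, h]⟩
  · exact .inr ⟨(not_lt.1 h).lt_of_ne (hf.ne hab.ne'), by simp [subdivMap, hab, h]⟩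

theorem subdivMap_adj (f : H →g G) (hf : Function.Injective f) {z z'}
    (h : (subdiv r H).Adj z z') : (subdiv r G).Adj (subdivMap r f z) (subdivMap r f z') := by
  have inl_inr : ∀ {u a b : W} {i : Fin r}, (subdiv r H).Adj (inl u) (inr (a, b, i)) →
      (subdiv r G).Adj (subdivMap r f (inl u)) (subdivMap r f (inr (a, b, i))) := by
    intro u a b i h
    obtain ⟨hab, hlt, hu⟩ := subdiv_adj_inl_inr.1 h
    rcases subdivMap_inr_of_lt hf hlt i with ⟨hflt, he⟩ | ⟨hflt, he⟩ <;>
      rw [he, subdivMap, Sum.map_inl, subdiv_adj_inl_inr]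
    · rcases hu with ⟨rfl, hi⟩ | ⟨rfl, hi⟩ <;> simp [f.map_adj hab, hflt, hi]
    · rcases hu with ⟨rfl, hi⟩ | ⟨rfl, hi⟩
      · simp [(f.map_adj hab).symm, hflt, hi, Fin.val_rev]
      · simp only [(f.map_adj hab).symm, hflt, hi, Fin.val_rev, true_and]
        exact .inl (by have := i.pos; omega)
  rcases z with u | ⟨a, b, i⟩ <;> rcases z' with v | ⟨a', b', j⟩
  · exact absurd h subdiv_not_adj_inl_inl
  · exact inl_inr h
  · exact (inl_inr h.symm).symm
  · obtain ⟨rfl, rfl, hab, hlt, hij⟩ := subdiv_adj_inr_inr.1 h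
    rcases subdivMap_inr_of_lt hf hlt i with ⟨hflt, he⟩ | ⟨hflt, he⟩ <;>
      rcases subdivMap_inr_of_lt hf hlt j with ⟨hflt', he'⟩ | ⟨hflt', he'⟩ <;>
      rw [he, he', subdiv_adj_inr_inr]
    · exact ⟨rfl, rfl, f.map_adj hab, hflt, hij⟩
    · exact absurd hflt' (asymm hflt)
    · exact absurd hflt' (asymm hflt)
    · refine ⟨rfl, rfl, (f.map_adj hab).symm, hflt, ?_⟩
      simp only [Fin.val_rev]
      omega

theorem SimpleGraph.IsContained.subdiv (h : H ⊑ G) : subdiv r H ⊑ subdiv r G :=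
  let ⟨f⟩ := h
  ⟨⟨⟨subdivMap r f, subdivMap_adj f.toHom f.injective⟩, subdivMap_injective f.injective⟩⟩

end Functoriality

section BranchVertices

variable {V W : Type*} [LinearOrder V] [LinearOrder W] {G : SimpleGraph V} {H : SimpleGraph W}
  {r : ℕ}

theorem isContained_of_subdiv_of_forall_eq_inl (hr : 1 ≤ r)
    (Φ : Copy (subdiv r H) (subdiv r G)) {g : W → V} (hg : ∀ a, Φ (inl a) = inl (g a)) :
    H ⊑ G := by
  have hadj : ∀ {a b}, H.Adj a b → a < b → G.Adj (g a) (g b) := by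
    intro a b hab hlt
    obtain ⟨u, hu, hadj⟩ := ((isNonbacktrackingWalk_edgePath hab hlt hr).map Φ).exists_inl_adj
      (u := g a) (by simp [hg])
    rw [Function.comp_apply, edgePath_of_lt (by omega), hg, inl.injEq] at hu
    rwa [hu]
  refine ⟨⟨⟨g, fun {a b} hab => ?_⟩, fun a b h => ?_⟩⟩
  · rcases lt_or_gt_of_ne hab.ne with hlt | hlt
    · exact hadj hab hlt
    · exact (hadj hab.symm hlt).symm
  · have : Φ (inl a) = Φ (inl b) := by rw [hg, hg]; exact congrArg inl h
    simpa using Φ.injective this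

theorem exists_eq_inl_of_adj_of_adj_of_adj (hr : 1 ≤ r) (Φ : Copy (subdiv r H) (subdiv r G))
    {a b c d : W} (hb : H.Adj a b) (hc : H.Adj a c) (hd : H.Adj a d) (hbc : b ≠ c) (hbd : b ≠ d)
    (hcd : c ≠ d) : ∃ v, Φ (inl a) = inl v := by
  have inj : ∀ {e e' : W} {i i' : Fin r},
      (inr (min a e, max a e, i) : W ⊕ (W × W × Fin r)) = inr (min a e', max a e', i') →
      e = e' := by
    intro e e' i i' h
    simp only [inr.injEq, Prod.mk.injEq] at h
    grind
  obtain ⟨i, hi⟩ := subdiv_exists_adj_inl_inr hr hb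
  obtain ⟨j, hj⟩ := subdiv_exists_adj_inl_inr hr hc
  obtain ⟨k, hk⟩ := subdiv_exists_adj_inl_inr hr hd
  exact subdiv_eq_inl_of_adj_of_adj_of_adj (Φ.toHom.map_adj hi) (Φ.toHom.map_adj hj)
    (Φ.toHom.map_adj hk) (Φ.injective.ne fun h => hbc (inj h))
    (Φ.injective.ne fun h => hbd (inj h)) (Φ.injective.ne fun h => hcd (inj h))

theorem isContained_of_subdiv_of_forall_exists_three_adj (hr : 1 ≤ r)
    (hH : ∀ a, ∃ b c d, H.Adj a b ∧ H.Adj a c ∧ H.Adj a d ∧ b ≠ c ∧ b ≠ d ∧ c ≠ d)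
    (h : subdiv r H ⊑ subdiv r G) : H ⊑ G := by
  obtain ⟨Φ⟩ := h
  have hinl : ∀ a, ∃ v, Φ (inl a) = inl v := fun a => by
    obtain ⟨b, c, d, hb, hc, hd, hbc, hbd, hcd⟩ := hH a
    exact exists_eq_inl_of_adj_of_adj_of_adj hr Φ hb hc hd hbc hbd hcd
  choose g hg using hinl
  exact isContained_of_subdiv_of_forall_eq_inl hr Φ hg

end BranchVertices

theorem top_exists_three_adj {W : Type*} [Fintype W] (hW : 4 ≤ Fintype.card W) (a : W) :
    ∃ b c d, (⊤ : SimpleGraph W).Adj a b ∧ (⊤ : SimpleGraph W).Adj a c ∧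
      (⊤ : SimpleGraph W).Adj a d ∧ b ≠ c ∧ b ≠ d ∧ c ≠ d := by
  classical
  have hcard : 2 < (Finset.univ.erase a).card := by
    rw [Finset.card_erase_of_mem (Finset.mem_univ a), Finset.card_univ]
    omega
  obtain ⟨b, c, d, hb, hc, hd, hbc, hbd, hcd⟩ := Finset.two_lt_card_iff.1 hcard
  simp only [Finset.mem_erase, Finset.mem_univ, and_true] at hb hc hd
  exact ⟨b, c, d, hb.symm, hc.symm, hd.symm, hbc, hbd, hcd⟩

section Triangle

variable {V : Type*} [LinearOrder V] {G : SimpleGraph V} {r : ℕ}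

def triangleSide (r : ℕ) : ℕ → ℕ → Fin 3 ⊕ (Fin 3 × Fin 3 × Fin r)
  | 0, j => edgePath r 0 1 j
  | 1, j => edgePath r 1 2 j
  | _, j => edgePath r 0 2 (r + 1 - j)

/-- The closed walk `0 → 1 → 2 → 0` of length `3 (r + 1)` around the subdivided triangle,
repeated forever. -/
def triangleWalk (r t : ℕ) : Fin 3 ⊕ (Fin 3 × Fin 3 × Fin r) :=
  triangleSide r (t / (r + 1) % 3) (t % (r + 1))

theorem isNonbacktrackingWalk_triangleSide (hr : 1 ≤ r) {s : ℕ} (hs : s < 3) :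
    IsNonbacktrackingWalk (subdiv r ⊤) (triangleSide r s) (r + 1) := by
  interval_cases s
  · exact isNonbacktrackingWalk_edgePath (by decide) (by decide) hr
  · exact isNonbacktrackingWalk_edgePath (by decide) (by decide) hr
  · exact (isNonbacktrackingWalk_edgePath (by decide) (by decide) hr).reverse

theorem triangleSide_succ_zero {s : ℕ} (hs : s < 3) :
    triangleSide r ((s + 1) % 3) 0 = triangleSide r s (r + 1) := by
  interval_cases s <;> simp [triangleSide, edgePath_of_lt]

theorem triangleSide_succ_one_ne (hr : 1 ≤ r) {s : ℕ} (hs : s < 3) :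
    triangleSide r ((s + 1) % 3) 1 ≠ triangleSide r s r := by
  interval_cases s <;> simp [triangleSide, edgePath_of_pos, hr]

theorem triangleWalk_mul_add (s : ℕ) {j : ℕ} (hj : j ≤ r + 1) :
    triangleWalk r ((r + 1) * s + j) = triangleSide r (s % 3) j := by
  rcases Nat.lt_or_ge j (r + 1) with hj' | hj'
  · rw [triangleWalk, Nat.mul_add_div (by omega), Nat.mul_add_mod, Nat.div_eq_of_lt hj',
      Nat.mod_eq_of_lt hj', add_zero]
  · obtain rfl : j = r + 1 := by omega
    rw [← triangleSide_succ_zero (Nat.mod_lt _ (by omega)), ← mul_add_one, triangleWalk,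
      Nat.mul_div_cancel_left _ (by omega), Nat.mul_mod_right]
    congr 1
    omega

theorem triangleWalk_add_period (t : ℕ) :
    triangleWalk r (t + 3 * (r + 1)) = triangleWalk r t := by
  rw [triangleWalk, triangleWalk, Nat.add_mul_mod_self_right, mul_comm,
    Nat.add_mul_div_left _ _ (by omega), Nat.add_mod_right]

theorem isNonbacktrackingWalk_triangleWalk (hr : 1 ≤ r) (n : ℕ) :
    IsNonbacktrackingWalk (subdiv r ⊤) (triangleWalk r) n := by
  have hdecomp : ∀ t, ∃ s j, j < r + 1 ∧ t = (r + 1) * s + j :=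
    fun t => ⟨t / (r + 1), t % (r + 1), Nat.mod_lt _ (by omega), (Nat.div_add_mod _ _).symm⟩
  have hside : ∀ s, IsNonbacktrackingWalk (subdiv r ⊤) (triangleSide r (s % 3)) (r + 1) :=
    fun s => isNonbacktrackingWalk_triangleSide hr (Nat.mod_lt _ (by omega))
  refine ⟨fun t _ => ?_, fun t _ => ?_⟩
  · obtain ⟨s, j, hj, rfl⟩ := hdecomp t
    rw [add_assoc, triangleWalk_mul_add s hj.le, triangleWalk_mul_add s hj]
    exact (hside s).adj j hj
  · obtain ⟨s, j, hj, rfl⟩ := hdecomp t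
    rw [triangleWalk_mul_add s hj.le]
    rcases Nat.lt_or_ge j r with hjr | hjr
    · rw [add_assoc, triangleWalk_mul_add s (by omega)]
      exact (hside s).ne j (by omega)
    · rw [show j = r by omega, show (r + 1) * s + r + 2 = (r + 1) * (s + 1) + 1 by ring,
        triangleWalk_mul_add _ (by omega), show (s + 1) % 3 = (s % 3 + 1) % 3 by omega]
      exact triangleSide_succ_one_ne hr (Nat.mod_lt _ (by omega))

theorem not_cliqueFree_three_of_subdiv (hr : 1 ≤ r)
    (h : subdiv r (⊤ : SimpleGraph (Fin 3)) ⊑ subdiv r G) : ¬ G.CliqueFree 3 := by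
  obtain ⟨Φ⟩ := h
  have hw : ∀ n, IsNonbacktrackingWalk (subdiv r G) (Φ ∘ triangleWalk r) n :=
    fun n => (isNonbacktrackingWalk_triangleWalk hr n).map Φ
  have step : ∀ t u, Φ (triangleWalk r t) = inl u →
      ∃ u', Φ (triangleWalk r (t + (r + 1))) = inl u' ∧ G.Adj u u' :=
    fun t u h => ((hw _).shift le_rfl).exists_inl_adj (by simpa using h)
  obtain ⟨t, -, u₀, h₀⟩ := (hw r).exists_inl
  obtain ⟨u₁, h₁, h₀₁⟩ := step _ _ h₀
  obtain ⟨u₂, h₂, h₁₂⟩ := step _ _ h₁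
  obtain ⟨u₃, h₃, h₂₃⟩ := step _ _ h₂
  rw [show t + (r + 1) + (r + 1) + (r + 1) = t + 3 * (r + 1) by ring,
    triangleWalk_add_period] at h₃
  obtain rfl : u₀ = u₃ := inl_injective (h₀.symm.trans h₃)
  exact fun hG => hG {u₀, u₁, u₂} (is3Clique_triple_iff.2 ⟨h₀₁, h₂₃.symm, h₁₂⟩)

end Triangle

/-- For `r ≥ 1`: a graph `G` contains `K_m` as a subgraph if and only if the
`r`-subdivision of `G` contains the `r`-subdivision of `K_m` as a subgraph. -/
theorem stmt18 {V : Type*} [LinearOrder V] (G : SimpleGraph V) (r m : ℕ) (hr : 1 ≤ r) :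
    Contains (⊤ : SimpleGraph (Fin m)) G ↔
      Contains (subdiv r (⊤ : SimpleGraph (Fin m))) (subdiv r G) := by
  rw [contains_iff_isContained, contains_iff_isContained]
  refine ⟨IsContained.subdiv, fun h => ?_⟩
  rw [← not_cliqueFree_iff_top_isContained]
  match m, h with
  | 0, _ => exact not_cliqueFree_zero
  | 1, ⟨Φ⟩ => exact cliqueFree_one.not.2 (not_isEmpty_iff.2 ⟨(Φ (inl 0)).elim id Prod.fst⟩)
  | 2, h =>
    rw [cliqueFree_two]
    rintro rfl
    rw [subdiv_bot] at h
    exact free_bot (subdiv_ne_bot hr top_ne_bot) h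
  | 3, h => exact not_cliqueFree_three_of_subdiv hr h
  | n + 4, h =>
    rw [not_cliqueFree_iff_top_isContained]
    exact isContained_of_subdiv_of_forall_exists_three_adj hr (top_exists_three_adj (by simp)) h
end
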